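/- arXiv:2301.00074 — 9 statements merged into one kernel-verified Lean document; each statement's English description precedes it below -/
import Mathlib

section
/- A puzzle P is a strong uniquely solvable puzzle if and only if the tripartite 3-hypergraph H_P has no non-trivial 3D matching. -/
/-- Exactly two of the three propositions hold. -/
def ExactlyTwo (A B C : Prop) : Prop :=
  (A ∧ B ∧ ¬C) ∨ (A ∧ ¬B ∧ C) ∨ (¬A ∧ B ∧ C)

/-- At least two of the three propositions hold. -/
def AtLeastTwo (A B C : Prop) : Prop :=
  (A ∧ B) ∨ (A ∧ C) ∨ (B ∧ C)

/-- A puzzle of width `k` is a finite set of rows in `{1,2,3}^k`; we use the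
alphabet `Fin 3` whose three elements are denoted `1`, `2`, `3` (`3 = 0`).
`P` is a strong uniquely solvable puzzle (strong USP). -/
def IsSUSP {k : ℕ} (P : Finset (Fin k → Fin 3)) : Prop :=
  ∀ π₁ π₂ π₃ : Equiv.Perm {r // r ∈ P},
    (π₁ = π₂ ∧ π₂ = π₃) ∨
    ∃ (r : {r // r ∈ P}) (c : Fin k),
      ExactlyTwo ((π₁ r).1 c = 1) ((π₂ r).1 c = 2) ((π₃ r).1 c = 3)

/-!
A 3D matching of the tripartite hypergraph on `P ⊔ P ⊔ P` with `|P|` edges that are pairwise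
disjoint in every coordinate makes each coordinate projection a bijection onto `P`, so it is the
set of triples `(π₁ r, π₂ r, π₃ r)` for three permutations of `P`; the trivial matching is the
case `π₁ = π₂ = π₃`. Its triples are edges of `H_P` exactly when no row `r` and column `c`
witness "exactly two", which is the negation of the strong USP condition for `π₁, π₂, π₃`.
-/

open Finset

theorem Finset.image_univ_equiv_val {α β ι : Type*} [DecidableEq β] [Fintype ι] {s : Finset α}
    (e : ι ≃ {x // x ∈ s}) (f : α → β) :
    univ.image (fun i => f (e i).1) = s.image f := by
  ext b
  simp [e.exists_congr_left]

namespace Tripartite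

variable {α : Type*} [DecidableEq α]

/-- `M` is a 3D matching, of size `|P|`, of the tripartite 3-hypergraph with vertex set
`P ⊔ P ⊔ P` whose edges are the triples satisfying `E`. -/
def IsMatching (E : α → α → α → Prop) (P : Finset α) (M : Finset (α × α × α)) : Prop :=
  (∀ e ∈ M, e.1 ∈ P ∧ e.2.1 ∈ P ∧ e.2.2 ∈ P ∧ E e.1 e.2.1 e.2.2) ∧
    M.card = P.card ∧
    ∀ e₁ ∈ M, ∀ e₂ ∈ M, e₁ ≠ e₂ → e₁.1 ≠ e₂.1 ∧ e₁.2.1 ≠ e₂.2.1 ∧ e₁.2.2 ≠ e₂.2.2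

def trivialMatching (P : Finset α) : Finset (α × α × α) :=
  P.image fun r => (r, r, r)

variable {P : Finset α}

def ofPerms (π₁ π₂ π₃ : Equiv.Perm P) : Finset (α × α × α) :=
  univ.image fun r => ((π₁ r).1, (π₂ r).1, (π₃ r).1)

theorem mem_ofPerms {π₁ π₂ π₃ : Equiv.Perm P} {e : α × α × α} :
    e ∈ ofPerms π₁ π₂ π₃ ↔ ∃ r, ((π₁ r).1, (π₂ r).1, (π₃ r).1) = e := by
  simp [ofPerms]

theorem isMatching_ofPerms {E : α → α → α → Prop} {π₁ π₂ π₃ : Equiv.Perm P}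
    (hE : ∀ r, E (π₁ r) (π₂ r) (π₃ r)) : IsMatching E P (ofPerms π₁ π₂ π₃) := by
  have hinj : Function.Injective fun r => ((π₁ r).1, (π₂ r).1, (π₃ r).1) :=
    fun r r' h => π₁.injective (Subtype.ext (congrArg Prod.fst h))
  refine ⟨?_, ?_, ?_⟩
  · simp only [mem_ofPerms]
    rintro _ ⟨r, rfl⟩
    exact ⟨(π₁ r).2, (π₂ r).2, (π₃ r).2, hE r⟩
  · rw [ofPerms, card_image_of_injective _ hinj, card_univ, Fintype.card_coe]
  · simp only [mem_ofPerms]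
    rintro _ ⟨r, rfl⟩ _ ⟨r', rfl⟩ hne
    have hr : r ≠ r' := fun h => hne (h ▸ rfl)
    exact ⟨fun h => hr (π₁.injective (Subtype.ext h)), fun h => hr (π₂.injective (Subtype.ext h)),
      fun h => hr (π₃.injective (Subtype.ext h))⟩

theorem ofPerms_eq_trivialMatching_iff {π₁ π₂ π₃ : Equiv.Perm P} :
    ofPerms π₁ π₂ π₃ = trivialMatching P ↔ π₁ = π₂ ∧ π₂ = π₃ := by
  constructor
  · intro h
    have hval (r) : (π₁ r).1 = (π₂ r).1 ∧ (π₂ r).1 = (π₃ r).1 := by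
      have : ((π₁ r).1, (π₂ r).1, (π₃ r).1) ∈ trivialMatching P := h ▸ mem_ofPerms.2 ⟨r, rfl⟩
      obtain ⟨s, -, hs⟩ := mem_image.1 this
      simp only [Prod.mk.injEq] at hs
      exact ⟨hs.1 ▸ hs.2.1, hs.2.1 ▸ hs.2.2⟩
    exact ⟨Equiv.ext fun r => Subtype.ext (hval r).1, Equiv.ext fun r => Subtype.ext (hval r).2⟩
  · rintro ⟨rfl, rfl⟩
    exact image_univ_equiv_val π₁ fun r => (r, r, r)

theorem IsMatching.exists_eq_ofPerms {E : α → α → α → Prop} {M : Finset (α × α × α)}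
    (hM : IsMatching E P M) : ∃ π₁ π₂ π₃ : Equiv.Perm P, M = ofPerms π₁ π₂ π₃ := by
  obtain ⟨hmem, hcard, hdisj⟩ := hM
  have bijOn (f : α × α × α → α) (hmaps : ∀ e ∈ M, f e ∈ P)
      (hne : ∀ e₁ ∈ M, ∀ e₂ ∈ M, e₁ ≠ e₂ → f e₁ ≠ f e₂) : Set.BijOn f M P := by
    have hinj : Set.InjOn f M := fun e₁ h₁ e₂ h₂ h => by_contra fun h' => hne e₁ h₁ e₂ h₂ h' h
    exact ⟨hmaps, hinj, surjOn_of_injOn_of_card_le f hmaps hinj hcard.ge⟩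
  let g₁ := (bijOn Prod.fst (fun e he => (hmem e he).1)
    fun e₁ h₁ e₂ h₂ h => (hdisj e₁ h₁ e₂ h₂ h).1).equiv
  let g₂ := (bijOn (·.2.1) (fun e he => (hmem e he).2.1)
    fun e₁ h₁ e₂ h₂ h => (hdisj e₁ h₁ e₂ h₂ h).2.1).equiv
  let g₃ := (bijOn (·.2.2) (fun e he => (hmem e he).2.2.1)
    fun e₁ h₁ e₂ h₂ h => (hdisj e₁ h₁ e₂ h₂ h).2.2).equiv
  refine ⟨g₁.symm.trans g₁, g₁.symm.trans g₂, g₁.symm.trans g₃, ?_⟩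
  have hval (r : P) : (((g₁.symm.trans g₁) r).1, ((g₁.symm.trans g₂) r).1,
      ((g₁.symm.trans g₃) r).1) = id (g₁.symm r).1 := rfl
  rw [ofPerms, funext hval]
  exact ((image_univ_equiv_val (s := M) g₁.symm id).trans image_id).symm

theorem exists_isMatching_ne_trivialMatching_iff (E : α → α → α → Prop) (P : Finset α) :
    (∃ M, IsMatching E P M ∧ M ≠ trivialMatching P) ↔
      ∃ π₁ π₂ π₃ : Equiv.Perm P, ¬(π₁ = π₂ ∧ π₂ = π₃) ∧ ∀ r, E (π₁ r) (π₂ r) (π₃ r) := by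
  constructor
  · rintro ⟨M, hM, hne⟩
    obtain ⟨π₁, π₂, π₃, rfl⟩ := hM.exists_eq_ofPerms
    exact ⟨π₁, π₂, π₃, ofPerms_eq_trivialMatching_iff.not.1 hne,
      fun r => (hM.1 _ (mem_ofPerms.2 ⟨r, rfl⟩)).2.2.2⟩
  · rintro ⟨π₁, π₂, π₃, hne, hE⟩
    exact ⟨_, isMatching_ofPerms hE, ofPerms_eq_trivialMatching_iff.not.2 hne⟩

end Tripartite

/-- A puzzle `P` is a strong USP iff the tripartite 3-hypergraph `H_P`
(whose edges are the triples `(a,b,c) ∈ P³` such that no column witnesses the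
"exactly two" condition) has no non-trivial 3D matching. -/
theorem susp_iff_no_nontrivial_3dm {k : ℕ} (P : Finset (Fin k → Fin 3)) :
    IsSUSP P ↔
      ¬ ∃ M : Finset ((Fin k → Fin 3) × (Fin k → Fin 3) × (Fin k → Fin 3)),
        (∀ e ∈ M, e.1 ∈ P ∧ e.2.1 ∈ P ∧ e.2.2 ∈ P ∧
          ∀ c : Fin k, ¬ ExactlyTwo (e.1 c = 1) (e.2.1 c = 2) (e.2.2 c = 3)) ∧
        M.card = P.card ∧
        (∀ e₁ ∈ M, ∀ e₂ ∈ M, e₁ ≠ e₂ →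
          e₁.1 ≠ e₂.1 ∧ e₁.2.1 ≠ e₂.2.1 ∧ e₁.2.2 ≠ e₂.2.2) ∧
        M ≠ P.image (fun r => (r, r, r)) := by
  have h := Tripartite.exists_isMatching_ne_trivialMatching_iff
    (fun a b c => ∀ i, ¬ ExactlyTwo (a i = 1) (b i = 2) (c i = 3)) P
  simp only [Tripartite.IsMatching, Tripartite.trivialMatching, and_assoc] at h
  rw [h, IsSUSP]
  simp only [not_exists, not_and, not_forall, not_not, or_iff_not_imp_left]
end

section
/- If P is a uniquely solvable puzzle of width k, then for all e ∈ {1,2,3} and all distinct rows r1, r2 ∈ P, there is a column c ∈ {1,...,k} where exactly one of the rows r1, r2 has the value e in column c. -/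
/-- `P` is a uniquely solvable puzzle (USP). -/
def IsUSP {k : ℕ} (P : Finset (Fin k → Fin 3)) : Prop :=
  ∀ π₁ π₂ π₃ : Equiv.Perm {r // r ∈ P},
    (π₁ = π₂ ∧ π₂ = π₃) ∨
    ∃ (r : {r // r ∈ P}) (c : Fin k),
      AtLeastTwo ((π₁ r).1 c = 1) ((π₂ r).1 c = 2) ((π₃ r).1 c = 3)


/-- If `P` is a USP, then for every symbol `e ∈ {1,2,3}` and all distinct rows
`r₁, r₂ ∈ P` there is a column where exactly one of the two rows has the
value `e`. -/
theorem usp_unique_pieces {k : ℕ} (P : Finset (Fin k → Fin 3))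
    (hP : IsUSP P) (e : Fin 3) (he : e = 1 ∨ e = 2 ∨ e = 3)
    (r₁ r₂ : Fin k → Fin 3) (hr₁ : r₁ ∈ P) (hr₂ : r₂ ∈ P) (hne : r₁ ≠ r₂) :
    ∃ c : Fin k, Xor' (r₁ c = e) (r₂ c = e) := by
  by_contra hcon
  push_neg at hcon
  have hagree : ∀ c : Fin k, r₁ c = e ↔ r₂ c = e := by
    intro c
    have := hcon c
    unfold Xor' at this
    unfold Xor at this
    tauto
  set s₁ : {r // r ∈ P} := ⟨r₁, hr₁⟩ with hs₁
  set s₂ : {r // r ∈ P} := ⟨r₂, hr₂⟩ with hs₂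
  have hsne : s₁ ≠ s₂ := fun h => hne (congrArg Subtype.val h)
  set σ : Equiv.Perm {r // r ∈ P} := Equiv.swap s₁ s₂ with hσ
  have hσne : σ ≠ 1 := by
    intro h
    have h2 : σ s₁ = s₁ := by rw [h]; rfl
    rw [hσ, Equiv.swap_apply_left] at h2
    exact hsne h2.symm
  have key : ∀ (r : {r // r ∈ P}) (c : Fin k), (σ r).1 c = e → r.1 c = e := by
    intro r c h1
    by_cases hr1 : r = s₁
    · rw [hr1, hσ, Equiv.swap_apply_left] at h1
      rw [hr1]
      exact (hagree c).mpr h1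
    · by_cases hr2 : r = s₂
      · rw [hr2, hσ, Equiv.swap_apply_right] at h1
        rw [hr2]
        exact (hagree c).mp h1
      · rwa [hσ, Equiv.swap_apply_of_ne_of_ne hr1 hr2] at h1
  rcases he with rfl | rfl | rfl
  · rcases hP σ 1 1 with ⟨h, _⟩ | ⟨r, c, h⟩
    · exact hσne h
    · rcases h with ⟨hA, hB⟩ | ⟨hA, hC⟩ | ⟨hB, hC⟩
      · exact absurd (hB ▸ key r c hA : (2 : Fin 3) = 1) (by decide)
      · exact absurd (hC ▸ key r c hA : (3 : Fin 3) = 1) (by decide)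
      · exact absurd (hB ▸ hC : (2 : Fin 3) = 3) (by decide)
  · rcases hP 1 σ 1 with ⟨h, h'⟩ | ⟨r, c, h⟩
    · exact hσne (h ▸ h')
    · rcases h with ⟨hA, hB⟩ | ⟨hA, hC⟩ | ⟨hB, hC⟩
      · exact absurd (hA ▸ key r c hB : (1 : Fin 3) = 2) (by decide)
      · exact absurd (hA ▸ hC : (1 : Fin 3) = 3) (by decide)
      · exact absurd (hC ▸ key r c hB : (3 : Fin 3) = 2) (by decide)
  · rcases hP 1 1 σ with ⟨_, h'⟩ | ⟨r, c, h⟩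
    · exact hσne h'.symm
    · rcases h with ⟨hA, hB⟩ | ⟨hA, hC⟩ | ⟨hB, hC⟩
      · exact absurd (hA ▸ hB : (1 : Fin 3) = 2) (by decide)
      · exact absurd (hA ▸ key r c hC : (1 : Fin 3) = 3) (by decide)
      · exact absurd (hB ▸ key r c hC : (2 : Fin 3) = 3) (by decide)
end

section
/- Let P be a (2,k)-puzzle. If P is a uniquely solvable puzzle, then P is a strong uniquely solvable puzzle. -/
/-!
A column that reads `1`, `2`, `3` on the rows `π₁ r`, `π₂ r`, `π₃ r` forces these three rows to be
distinct, which a puzzle with two rows cannot provide. So the "at least two" witness of a USP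
never has all three matches, i.e. it is already an "exactly two" witness.
-/

theorem AtLeastTwo.exactlyTwo {A B C : Prop} (h : AtLeastTwo A B C) (hABC : ¬(A ∧ B ∧ C)) :
    ExactlyTwo A B C := by
  unfold AtLeastTwo ExactlyTwo at *
  tauto

theorem Fintype.eq_or_eq_or_eq_of_card_le_two {α : Type*} [Fintype α]
    (h : Fintype.card α ≤ 2) (x y z : α) : x = y ∨ x = z ∨ y = z := by
  by_contra! hne
  obtain ⟨hxy, hxz, hyz⟩ := hne
  have hinj : Function.Injective ![x, y, z] := by
    intro i j hij
    fin_cases i <;> fin_cases j <;> simp_all [eq_comm]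
  have := Fintype.card_le_of_injective _ hinj
  simp only [Fintype.card_fin] at this
  omega

theorem not_one_two_three_of_card_le_two {k : ℕ} {P : Finset (Fin k → Fin 3)} (hP : P.card ≤ 2)
    (r₁ r₂ r₃ : {r // r ∈ P}) (c : Fin k) : ¬(r₁.1 c = 1 ∧ r₂.1 c = 2 ∧ r₃.1 c = 3) := by
  rintro ⟨h₁, h₂, h₃⟩
  rcases Fintype.eq_or_eq_or_eq_of_card_le_two (by simpa using hP) r₁ r₂ r₃ with rfl | rfl | rfl <;>
    simp_all

/-- Every size-2 uniquely solvable puzzle is a strong uniquely solvable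
puzzle. -/
theorem usp_card_two_is_susp {k : ℕ} (P : Finset (Fin k → Fin 3))
    (hcard : P.card = 2) (hP : IsUSP P) : IsSUSP P := by
  intro π₁ π₂ π₃
  refine (hP π₁ π₂ π₃).imp_right ?_
  rintro ⟨r, c, hr⟩
  exact ⟨r, c, hr.exactlyTwo (not_one_two_three_of_card_le_two hcard.le _ _ _ c)⟩
end

section
/- Let P be a puzzle of width k. There exist e ∈ {1,2,3} and distinct rows r1, r2 ∈ P such that r1 and r2 have the value e in exactly the same set of columns if and only if there exist distinct rows r1, r2 ∈ P such that the two-row subpuzzle {r1, r2} is not a strong uniquely solvable puzzle. -/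
/-!
The permutations of a two-row puzzle `{x, y}` are `1` and the swap `σ`, so a triple of them
that is not constant is, after right multiplication by a common permutation (which only
relabels rows), `σ` in one slot `e` and `1` in the other two. Read through such a triple, a
row `r` and a column `c` show exactly two of the three symbols iff `r c ≠ e` and `σ r c = e`.
For `σ` the swap of `x` and `y` this happens for some `r` and `c` iff `x` and `y` differ in
their `e`-columns.
-/

open Equiv Finset

theorem exactlyTwo_ite_iff (e u v : Fin 3) :
    ExactlyTwo ((if 1 = e then v else u) = 1) ((if 2 = e then v else u) = 2)
      ((if 3 = e then v else u) = 3) ↔ u ≠ e ∧ v = e := by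
  revert e u v; unfold ExactlyTwo; decide

theorem exists_eq_mulSingle_mul {G : Type*} [Group G] {σ : G} (hG : ∀ g : G, g = 1 ∨ g = σ)
    (hσ : σ * σ = 1) {g₁ g₂ g₃ : G} (h : ¬(g₁ = g₂ ∧ g₂ = g₃)) :
    ∃ (e : Fin 3) (ρ : G), g₁ = (Pi.mulSingle e σ : Fin 3 → G) 1 * ρ ∧
      g₂ = (Pi.mulSingle e σ : Fin 3 → G) 2 * ρ ∧ g₃ = (Pi.mulSingle e σ : Fin 3 → G) 3 * ρ := by
  rcases hG g₁ with h₁ | h₁ <;> rcases hG g₂ with h₂ | h₂ <;> rcases hG g₃ with h₃ | h₃ <;>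
    subst g₁ g₂ g₃
  · exact absurd ⟨rfl, rfl⟩ h
  · exact ⟨3, 1, by simp⟩
  · exact ⟨2, 1, by simp⟩
  · exact ⟨1, σ, by simp [hσ]⟩
  · exact ⟨1, 1, by simp⟩
  · exact ⟨2, σ, by simp [hσ]⟩
  · exact ⟨3, σ, by simp [hσ]⟩
  · exact absurd ⟨rfl, rfl⟩ h

theorem Equiv.Perm.eq_one_or_eq_swap {α : Type*} [DecidableEq α] {a b : α}
    (hα : ∀ z, z = a ∨ z = b) (π : Perm α) : π = 1 ∨ π = swap a b := by
  have hπ : ∀ z, π z = a ∨ π z = b := fun z => hα (π z)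
  rcases hα (π a) with ha | ha <;> [left; right] <;> ext z <;>
    rcases hα z with rfl | rfl <;> grind [Perm.one_apply, Equiv.apply_eq_iff_eq]

section
variable {k : ℕ} {P : Finset (Fin k → Fin 3)}

/-- The second alternative in `IsSUSP`, for the triple `(π 1, π 2, π 3)`; note `π 3 = π 0`. -/
def Distinguishes (π : Fin 3 → Perm {r // r ∈ P}) : Prop :=
  ∃ (r : {r // r ∈ P}) (c : Fin k),
    ExactlyTwo ((π 1 r).1 c = 1) ((π 2 r).1 c = 2) ((π 3 r).1 c = 3)

theorem distinguishes_mul_right_iff (π : Fin 3 → Perm {r // r ∈ P}) (ρ : Perm {r // r ∈ P}) :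
    Distinguishes (fun i => π i * ρ) ↔ Distinguishes π := by
  constructor
  · rintro ⟨r, c, h⟩; exact ⟨ρ r, c, h⟩
  · rintro ⟨r, c, h⟩; exact ⟨ρ.symm r, c, by simpa using h⟩

theorem distinguishes_mulSingle_iff (σ : Perm {r // r ∈ P}) (e : Fin 3) :
    Distinguishes (Pi.mulSingle e σ) ↔
      ∃ (r : {r // r ∈ P}) (c : Fin k), r.1 c ≠ e ∧ (σ r).1 c = e := by
  have hval : ∀ i r c, ((Pi.mulSingle e σ : Fin 3 → Perm _) i r).1 c =
      if i = e then (σ r).1 c else r.1 c := by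
    intro i r c; rw [Pi.mulSingle_apply]; split_ifs <;> rfl
  simp only [Distinguishes, hval, exactlyTwo_ite_iff]

theorem distinguishes_mulSingle_swap_iff {x y : Fin k → Fin 3} (hx : x ∈ P) (hy : y ∈ P)
    (e : Fin 3) :
    Distinguishes (Pi.mulSingle e (swap ⟨x, hx⟩ ⟨y, hy⟩)) ↔ ∃ c, ¬(x c = e ↔ y c = e) := by
  rw [distinguishes_mulSingle_iff]
  constructor
  · rintro ⟨r, c, hr, hσr⟩
    refine ⟨c, ?_⟩
    rw [swap_apply_def] at hσr
    split_ifs at hσr with h₁ h₂ <;> subst_vars <;> grind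
  · rintro ⟨c, hc⟩
    by_cases hxc : x c = e
    · exact ⟨⟨y, hy⟩, c, by tauto, by simpa⟩
    · exact ⟨⟨x, hx⟩, c, hxc, by simp only [swap_apply_left]; tauto⟩

theorem not_isSUSP_of_forall_eq_iff {x y : Fin k → Fin 3} (hx : x ∈ P) (hy : y ∈ P)
    (hxy : x ≠ y) (e : Fin 3) (h : ∀ c, x c = e ↔ y c = e) : ¬IsSUSP P := by
  intro hP
  set σ := swap (⟨x, hx⟩ : {r // r ∈ P}) ⟨y, hy⟩
  set π : Fin 3 → Perm {r // r ∈ P} := Pi.mulSingle e σ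
  rcases hP (π 1) (π 2) (π 3) with h_eq | h_dist
  · have hσ : σ ≠ 1 := fun h => hxy (congrArg Subtype.val (swap_eq_one_iff.mp h))
    fin_cases e <;> simp_all [π]
  · obtain ⟨c, hc⟩ := (distinguishes_mulSingle_swap_iff hx hy e).1 h_dist
    exact hc (h c)

theorem exists_forall_eq_iff_of_not_isSUSP_pair {x y : Fin k → Fin 3}
    (h : ¬IsSUSP ({x, y} : Finset (Fin k → Fin 3))) : ∃ e : Fin 3, ∀ c, x c = e ↔ y c = e := by
  have hx : x ∈ ({x, y} : Finset _) := mem_insert_self x {y}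
  have hy : y ∈ ({x, y} : Finset _) := mem_insert_of_mem (mem_singleton_self y)
  have hpair : ∀ z : {r // r ∈ ({x, y} : Finset _)}, z = ⟨x, hx⟩ ∨ z = ⟨y, hy⟩ := by
    rintro ⟨z, hz⟩; simpa using hz
  simp only [IsSUSP, not_forall, not_or] at h
  obtain ⟨π₁, π₂, π₃, hne, hnd⟩ := h
  obtain ⟨e, ρ, rfl, rfl, rfl⟩ := exists_eq_mulSingle_mul
    (Perm.eq_one_or_eq_swap hpair) (swap_mul_self _ _) hne
  change ¬Distinguishes (fun i => Pi.mulSingle e _ i * ρ) at hnd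
  rw [distinguishes_mul_right_iff, distinguishes_mulSingle_swap_iff] at hnd
  push Not at hnd
  exact ⟨e, hnd⟩

end

/-- Two rows of `P` share the exact same set of `e`-columns for some symbol
`e ∈ {1,2,3}` iff some two-row subpuzzle of `P` fails to be a strong USP. -/
theorem repeated_piece_iff_bad_pair {k : ℕ} (P : Finset (Fin k → Fin 3)) :
    (∃ e : Fin 3, (e = 1 ∨ e = 2 ∨ e = 3) ∧
      ∃ r₁ ∈ P, ∃ r₂ ∈ P, r₁ ≠ r₂ ∧ ∀ c : Fin k, (r₁ c = e ↔ r₂ c = e)) ↔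
    (∃ r₁ ∈ P, ∃ r₂ ∈ P, r₁ ≠ r₂ ∧
      ¬ IsSUSP ({r₁, r₂} : Finset (Fin k → Fin 3))) := by
  constructor
  · rintro ⟨e, -, r₁, h₁, r₂, h₂, hne, he⟩
    exact ⟨r₁, h₁, r₂, h₂, hne,
      not_isSUSP_of_forall_eq_iff (mem_insert_self _ _) (by simp) hne e he⟩
  · rintro ⟨r₁, h₁, r₂, h₂, hne, hbad⟩
    obtain ⟨e, he⟩ := exists_forall_eq_iff_of_not_isSUSP_pair hbad
    exact ⟨e, (by decide : ∀ e : Fin 3, e = 1 ∨ e = 2 ∨ e = 3) e, r₁, h₁, r₂, h₂, hne, he⟩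
end

section
/- Let P be an (s,k)-puzzle that is a uniquely solvable puzzle. Then s ≤ Σ_{c1=0}^{k} Σ_{c2=0}^{k−c1} min( C(k,c1), C(k,c2), C(k, k−(c1+c2)) ), where C(n,m) denotes the binomial coefficient. -/
/-! In a USP the cells holding any one symbol determine the row: otherwise swapping two rows
with the same cells for that symbol, and keeping the other two symbols in place, would be a
second solution. Hence the rows with `c₁` ones and `c₂` twos (so `k - (c₁ + c₂)` threes) number
at most `min (C(k, c₁), C(k, c₂), C(k, k - (c₁ + c₂)))`, and summing over `(c₁, c₂)` gives the
bound. -/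

open Finset

theorem card_filter_eq_one_add_two_add_three {k : ℕ} (r : Fin k → Fin 3) :
    #{c | r c = 1} + #{c | r c = 2} + #{c | r c = 3} = k := by
  have h := card_eq_sum_card_fiberwise (f := r) (s := univ) (t := univ) fun _ _ => mem_univ _
  rw [Fin.sum_univ_three, card_univ, Fintype.card_fin] at h
  rw [show (3 : Fin 3) = 0 from rfl]
  omega

namespace IsUSP

variable {k : ℕ} {P : Finset (Fin k → Fin 3)}

theorem eq_one_of_forall_apply_eq_iff (hP : IsUSP P) (v : Fin 3)
    {σ : Equiv.Perm {r // r ∈ P}} (hσ : ∀ r c, (σ r).1 c = v ↔ r.1 c = v) : σ = 1 := by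
  let π : Fin 3 → Equiv.Perm {r // r ∈ P} := fun j => if j = v then σ else 1
  rcases hP (π 1) (π 2) (π 3) with ⟨h₁₂, h₂₃⟩ | ⟨r, c, hrc⟩
  · fin_cases v <;> simp_all [π]
  · have key : ∀ j, (π j r).1 c = j → r.1 c = j := by
      intro j hj
      by_cases hjv : j = v
      · subst hjv
        simpa [π] using (hσ r c).1 (by simpa [π] using hj)
      · simpa [π, hjv] using hj
    rcases hrc with ⟨h₁, h₂⟩ | ⟨h₁, h₃⟩ | ⟨h₂, h₃⟩
    · exact absurd ((key 1 h₁).symm.trans (key 2 h₂)) (by decide)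
    · exact absurd ((key 1 h₁).symm.trans (key 3 h₃)) (by decide)
    · exact absurd ((key 2 h₂).symm.trans (key 3 h₃)) (by decide)

theorem injOn_filter_eq (hP : IsUSP P) (v : Fin 3) :
    Set.InjOn (fun r : Fin k → Fin 3 => ({c | r c = v} : Finset (Fin k))) P := by
  intro r hr r' hr' h
  have hrr' : ∀ c, r c = v ↔ r' c = v := by simpa [Finset.ext_iff] using h
  by_contra hne
  have hswap : Equiv.swap (⟨r, hr⟩ : {r // r ∈ P}) ⟨r', hr'⟩ = 1 := by
    refine hP.eq_one_of_forall_apply_eq_iff v fun x c => ?_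
    rw [Equiv.swap_apply_def]
    split_ifs <;> simp_all
  exact hne (congrArg Subtype.val (Equiv.swap_eq_one_iff.mp hswap))

theorem card_le_choose (hP : IsUSP P) (v : Fin 3) {m : ℕ} {S : Finset (Fin k → Fin 3)}
    (hSP : S ⊆ P) (hS : ∀ r ∈ S, #{c | r c = v} = m) : #S ≤ k.choose m := by
  have h := card_le_card_of_injOn (t := powersetCard m (univ : Finset (Fin k)))
    (fun r : Fin k → Fin 3 => ({c | r c = v} : Finset (Fin k)))
    (fun r hr => mem_powersetCard.mpr ⟨subset_univ _, hS r hr⟩)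
    ((hP.injOn_filter_eq v).mono (by exact_mod_cast hSP))
  rwa [card_powersetCard, card_univ, Fintype.card_fin] at h

theorem card_filter_le (hP : IsUSP P) (c₁ c₂ : ℕ) :
    #{r ∈ P | #{c | r c = 1} = c₁ ∧ #{c | r c = 2} = c₂}
      ≤ min (min (k.choose c₁) (k.choose c₂)) (k.choose (k - (c₁ + c₂))) := by
  refine le_min (le_min ?_ ?_) ?_
  · exact hP.card_le_choose 1 (filter_subset _ _) fun r hr => (mem_filter.mp hr).2.1
  · exact hP.card_le_choose 2 (filter_subset _ _) fun r hr => (mem_filter.mp hr).2.2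
  · refine hP.card_le_choose 3 (filter_subset _ _) fun r hr => ?_
    have := (mem_filter.mp hr).2
    have := card_filter_eq_one_add_two_add_three r
    omega

end IsUSP

/-- USP bound: if `P` is an `(s,k)`-USP then
`s ≤ Σ_{c₁=0}^{k} Σ_{c₂=0}^{k-c₁} min(C(k,c₁), C(k,c₂), C(k, k-(c₁+c₂)))`. -/
theorem usp_bound {k : ℕ} (P : Finset (Fin k → Fin 3)) (hP : IsUSP P) :
    P.card ≤ ∑ c₁ ∈ Finset.range (k + 1), ∑ c₂ ∈ Finset.range (k - c₁ + 1),
      min (min (k.choose c₁) (k.choose c₂)) (k.choose (k - (c₁ + c₂))) := by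
  let fiber c₁ c₂ := {r ∈ P | #{c | r c = 1} = c₁ ∧ #{c | r c = 2} = c₂}
  have hcover : P ⊆ (range (k + 1)).biUnion fun c₁ => (range (k - c₁ + 1)).biUnion (fiber c₁) := by
    intro r hr
    have := card_filter_eq_one_add_two_add_three r
    simp only [mem_biUnion, mem_range, mem_filter, fiber]
    exact ⟨_, by omega, _, by omega, hr, rfl, rfl⟩
  calc #P ≤ #((range (k + 1)).biUnion fun c₁ => (range (k - c₁ + 1)).biUnion (fiber c₁)) :=
        card_le_card hcover
    _ ≤ ∑ c₁ ∈ range (k + 1), #((range (k - c₁ + 1)).biUnion (fiber c₁)) := card_biUnion_le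
    _ ≤ ∑ c₁ ∈ range (k + 1), ∑ c₂ ∈ range (k - c₁ + 1), #(fiber c₁ c₂) :=
        sum_le_sum fun _ _ => card_biUnion_le
    _ ≤ _ := sum_le_sum fun c₁ _ => sum_le_sum fun c₂ _ => hP.card_filter_le c₁ c₂
end

section
/- Let P be an (s,k)-puzzle that is a strong uniquely solvable puzzle with k > 1. Then there exists a (⌈s/3⌉, k−1)-puzzle that is a strong uniquely solvable puzzle. -/
lemma not_exactlyTwo_eq_one_eq_two_eq_three (x : Fin 3) :
    ¬ ExactlyTwo (x = 1) (x = 2) (x = 3) := by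
  unfold ExactlyTwo
  fin_cases x <;> decide

theorem IsSUSP.mono {k : ℕ} {P Q : Finset (Fin k → Fin 3)} (hQP : Q ⊆ P) (hP : IsSUSP P) :
    IsSUSP Q := by
  intro π₁ π₂ π₃
  let f : {r // r ∈ Q} ≃ {x : {r // r ∈ P} // x.1 ∈ Q} :=
    { toFun := fun x => ⟨⟨x.1, hQP x.2⟩, x.2⟩
      invFun := fun y => ⟨y.1.1, y.2⟩ }
  rcases hP (π₁.extendDomain f) (π₂.extendDomain f) (π₃.extendDomain f) with
    ⟨h₁₂, h₂₃⟩ | ⟨r, c, h⟩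
  · exact .inl ⟨Equiv.Perm.extendDomainHom_injective f h₁₂,
      Equiv.Perm.extendDomainHom_injective f h₂₃⟩
  by_cases hr : r.1 ∈ Q
  · right
    refine ⟨f.symm ⟨r, hr⟩, c, ?_⟩
    simp only [Equiv.Perm.extendDomain_apply_subtype _ f hr] at h
    exact h
  · simp only [Equiv.Perm.extendDomain_apply_not_subtype _ f hr] at h
    exact absurd h (not_exactlyTwo_eq_one_eq_two_eq_three _)

theorem IsSUSP.image {k l : ℕ} {Q : Finset (Fin k → Fin 3)}
    (ρ : (Fin k → Fin 3) → (Fin l → Fin 3)) (hQ : IsSUSP Q) (hρ : Set.InjOn ρ Q)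
    (hwit : ∀ a ∈ Q, ∀ b ∈ Q, ∀ d ∈ Q, ∀ c, ExactlyTwo (a c = 1) (b c = 2) (d c = 3) →
      ∃ c', ExactlyTwo (ρ a c' = 1) (ρ b c' = 2) (ρ d c' = 3)) :
    IsSUSP (Q.image ρ) := by
  intro σ₁ σ₂ σ₃
  let e : {r // r ∈ Q} ≃ {r // r ∈ Q.image ρ} := Equiv.ofBijective
    (fun x => ⟨ρ x.1, Finset.mem_image_of_mem ρ x.2⟩)
    ⟨fun a b hab => Subtype.ext (hρ a.2 b.2 (congrArg Subtype.val hab)), by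
      rintro ⟨y, hy⟩
      obtain ⟨x, hx, rfl⟩ := Finset.mem_image.mp hy
      exact ⟨⟨x, hx⟩, rfl⟩⟩
  have hρe : ∀ y, ρ (e.symm y).1 = y.1 := fun y => congrArg Subtype.val (e.apply_symm_apply y)
  rcases hQ (e.permCongr.symm σ₁) (e.permCongr.symm σ₂) (e.permCongr.symm σ₃) with
    ⟨h₁₂, h₂₃⟩ | ⟨r, c, h⟩
  · exact .inl ⟨e.permCongr.symm.injective h₁₂, e.permCongr.symm.injective h₂₃⟩
  simp only [Equiv.permCongr_symm_apply] at h
  obtain ⟨c', h'⟩ := hwit _ (e.symm (σ₁ (e r))).2 _ (e.symm (σ₂ (e r))).2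
    _ (e.symm (σ₃ (e r))).2 c h
  simp only [hρe] at h'
  exact .inr ⟨e r, c', h'⟩

section DeleteColumn

variable {m : ℕ} {Q : Finset (Fin (m + 1) → Fin 3)} {p : Fin (m + 1)} {v : Fin 3}

lemma injOn_comp_succAbove (hQ : ∀ g ∈ Q, g p = v) :
    Set.InjOn (fun g : Fin (m + 1) → Fin 3 => g ∘ p.succAbove) Q := by
  intro a ha b hb hab
  funext i
  rcases Fin.eq_self_or_eq_succAbove p i with rfl | ⟨j, rfl⟩
  · rw [hQ a ha, hQ b hb]
  · exact congrFun hab j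

theorem IsSUSP.image_comp_succAbove (hQ : IsSUSP Q) (hcol : ∀ g ∈ Q, g p = v) :
    IsSUSP (Q.image fun g => g ∘ p.succAbove) := by
  refine hQ.image _ (injOn_comp_succAbove hcol) fun a ha b hb d hd c h => ?_
  rcases Fin.eq_self_or_eq_succAbove p c with rfl | ⟨j, rfl⟩
  · rw [hcol a ha, hcol b hb, hcol d hd] at h
    exact absurd h (not_exactlyTwo_eq_one_eq_two_eq_three v)
  · exact ⟨j, h⟩

end DeleteColumn

theorem Finset.exists_ceil_div_card_le_card_fiber {α β : Type*} [Fintype β] [Nonempty β]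
    [DecidableEq β] (s : Finset α) (f : α → β) :
    ∃ y, ⌈(s.card : ℚ) / Fintype.card β⌉₊ ≤ (s.filter fun x => f x = y).card := by
  obtain ⟨y, -, hy⟩ := Finset.exists_le_card_fiber_of_nsmul_le_card_of_maps_to
    (s := s) (f := f) (t := Finset.univ) (b := (s.card : ℚ) / Fintype.card β)
    (fun _ _ => Finset.mem_univ _) Finset.univ_nonempty
    (by simp [nsmul_eq_mul, mul_div_cancel₀])
  exact ⟨y, Nat.ceil_le.mpr hy⟩

/-- Downward-closure bound: from an `(s,k)` strong USP with `k > 1` one gets a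
`(⌈s/3⌉, k-1)` strong USP. -/
theorem susp_width_reduction {k : ℕ} (P : Finset (Fin k → Fin 3))
    (hP : IsSUSP P) (hk : k > 1) :
    ∃ P' : Finset (Fin (k - 1) → Fin 3),
      P'.card = ⌈(P.card : ℚ) / 3⌉₊ ∧ IsSUSP P' := by
  obtain ⟨m, rfl⟩ : ∃ m, k = m + 1 := ⟨k - 1, by omega⟩
  obtain ⟨v, hv⟩ := P.exists_ceil_div_card_le_card_fiber fun g => g (Fin.last m)
  rw [Fintype.card_fin, Nat.cast_ofNat] at hv
  obtain ⟨Q, hQv, hQcard⟩ := Finset.exists_subset_card_eq hv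
  have hcol : ∀ g ∈ Q, g (Fin.last m) = v := fun g hg => (Finset.mem_filter.mp (hQv hg)).2
  have hQ : IsSUSP Q := hP.mono (hQv.trans (Finset.filter_subset _ _))
  refine ⟨Q.image fun g => g ∘ (Fin.last m).succAbove, ?_, hQ.image_comp_succAbove hcol⟩
  rw [Finset.card_image_of_injOn (injOn_comp_succAbove hcol), hQcard]
end

section
/- Let P be an (s,k)-puzzle that is a strong uniquely solvable puzzle. Then there exists an (s!, s·k)-puzzle that is a local strong uniquely solvable puzzle. -/
/-- `P` is a local strong uniquely solvable puzzle. -/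
def IsLocalSUSP {k : ℕ} (P : Finset (Fin k → Fin 3)) : Prop :=
  ∀ u ∈ P, ∀ v ∈ P, ∀ w ∈ P, ¬(u = v ∧ v = w) →
    ∃ c : Fin k, (u c, v c, w c) ∈
      ({(1, 2, 1), (1, 2, 2), (1, 1, 3), (1, 3, 3), (2, 2, 3), (3, 2, 3)} :
        Set (Fin 3 × Fin 3 × Fin 3))

/-!
Concatenate the rows of `P` in the order given by a permutation `π`; the `s!` permutations give
`s!` rows of width `s·k`. For three permutations that are not all equal, the strong USP property
yields a row `r` and a column `c` where exactly two of `(π₁ r)_c = 1`, `(π₂ r)_c = 2`,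
`(π₃ r)_c = 3` hold, and the six patterns of a local strong USP are precisely the triples in which
exactly two of these hold.
-/

theorem exactlyTwo_iff_mem_localPatterns (a b d : Fin 3) :
    ExactlyTwo (a = 1) (b = 2) (d = 3) ↔ (a, b, d) ∈
      ({(1, 2, 1), (1, 2, 2), (1, 1, 3), (1, 3, 3), (2, 2, 3), (3, 2, 3)} :
        Set (Fin 3 × Fin 3 × Fin 3)) := by
  simp only [ExactlyTwo, Set.mem_insert_iff, Set.mem_singleton_iff, Prod.mk.injEq]
  revert a b d
  decide

section concatRows

variable {α : Type*} {k : ℕ} (P : Finset (Fin k → α))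

noncomputable def concatRows (π : Equiv.Perm {r // r ∈ P}) : Fin (P.card * k) → α := fun i =>
  (π (P.equivFin.symm (finProdFinEquiv.symm i).1)).1 (finProdFinEquiv.symm i).2

@[simp]
theorem concatRows_finProdFinEquiv (π : Equiv.Perm {r // r ∈ P}) (r : {r // r ∈ P})
    (c : Fin k) : concatRows P π (finProdFinEquiv (P.equivFin r, c)) = (π r).1 c := by
  simp [concatRows]

theorem concatRows_injective : Function.Injective (concatRows P) := by
  intro π₁ π₂ h
  refine Equiv.ext fun r => Subtype.ext (funext fun c => ?_)
  simpa using congrFun h (finProdFinEquiv (P.equivFin r, c))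

variable [DecidableEq α]

noncomputable def permutationPuzzle : Finset (Fin (P.card * k) → α) :=
  Finset.univ.image (concatRows P)

theorem card_permutationPuzzle : (permutationPuzzle P).card = P.card.factorial := by
  rw [permutationPuzzle, Finset.card_image_of_injective _ (concatRows_injective P),
    Finset.card_univ, Fintype.card_perm, Fintype.card_coe]

end concatRows

theorem isLocalSUSP_permutationPuzzle {k : ℕ} {P : Finset (Fin k → Fin 3)} (hP : IsSUSP P) :
    IsLocalSUSP (permutationPuzzle P) := by
  intro u hu v hv w hw hne
  obtain ⟨π₁, -, rfl⟩ := Finset.mem_image.mp hu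
  obtain ⟨π₂, -, rfl⟩ := Finset.mem_image.mp hv
  obtain ⟨π₃, -, rfl⟩ := Finset.mem_image.mp hw
  rcases hP π₁ π₂ π₃ with ⟨rfl, rfl⟩ | ⟨r, c, hrc⟩
  · exact absurd ⟨rfl, rfl⟩ hne
  · refine ⟨finProdFinEquiv (P.equivFin r, c), ?_⟩
    simpa only [concatRows_finProdFinEquiv] using (exactlyTwo_iff_mem_localPatterns _ _ _).mp hrc

/-- Every `(s,k)` strong USP yields an `(s!, s·k)` local strong USP. -/
theorem susp_to_local_susp {k : ℕ} (P : Finset (Fin k → Fin 3))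
    (hP : IsSUSP P) :
    ∃ P' : Finset (Fin (P.card * k) → Fin 3),
      P'.card = Nat.factorial P.card ∧ IsLocalSUSP P' :=
  ⟨permutationPuzzle P, card_permutationPuzzle P, isLocalSUSP_permutationPuzzle hP⟩
end

section
/- If P is a uniquely solvable puzzle of width k, then |P| ≤ 2^k. -/
/-! A row of a USP is determined by the set of columns where it has a `3`: if two distinct rows
`a`, `b` had the same such set, the triple of permutations `(1, 1, swap a b)` would violate
unique solvability, since in every row a `3`-entry is then matched by a `3`-entry. Hence
`r ↦ {c | r c = 3}` embeds `P` into the `2^k` subsets of the columns. -/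

open Finset

namespace IsUSP

variable {k : ℕ} {P : Finset (Fin k → Fin 3)}

theorem perm_eq_one_of_forall_eq_three_iff (hP : IsUSP P) {σ : Equiv.Perm {r // r ∈ P}}
    (hσ : ∀ r c, (σ r).1 c = 3 ↔ r.1 c = 3) : σ = 1 := by
  rcases hP 1 1 σ with ⟨-, h⟩ | ⟨r, c, h⟩
  · exact h.symm
  · simp only [AtLeastTwo, Equiv.Perm.one_apply, hσ] at h
    omega

theorem eq_of_forall_eq_three_iff (hP : IsUSP P) {a b : {r // r ∈ P}}
    (hab : ∀ c, a.1 c = 3 ↔ b.1 c = 3) : a = b := by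
  refine Equiv.swap_eq_one_iff.mp (hP.perm_eq_one_of_forall_eq_three_iff fun r c => ?_)
  rcases eq_or_ne r a with rfl | hra
  · rw [Equiv.swap_apply_left, hab]
  rcases eq_or_ne r b with rfl | hrb
  · rw [Equiv.swap_apply_right, hab]
  · rw [Equiv.swap_apply_of_ne_of_ne hra hrb]

end IsUSP

/-- A uniquely solvable puzzle of width `k` has at most `2^k` rows. -/
theorem usp_card_le_two_pow {k : ℕ} (P : Finset (Fin k → Fin 3))
    (hP : IsUSP P) : P.card ≤ 2 ^ k := by
  classical
  have hinj : Set.InjOn (fun r : Fin k → Fin 3 => univ.filter (r · = 3)) P := by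
    intro a ha b hb hab
    have hab' : ∀ c, a c = 3 ↔ b c = 3 := by simpa [Finset.ext_iff] using hab
    exact congrArg Subtype.val (hP.eq_of_forall_eq_three_iff (a := ⟨a, ha⟩) (b := ⟨b, hb⟩) hab')
  calc P.card ≤ (univ : Finset (Finset (Fin k))).card :=
        card_le_card_of_injOn _ (fun _ _ => mem_coe.mpr (mem_univ _)) hinj
    _ = 2 ^ k := by simp
end

section
/- If two rows r1, r2 of a puzzle P of width k have the value e in exactly the same set of columns for some e ∈ {1,2,3} and r1 ≠ r2, then P is not a uniquely solvable puzzle. -/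
/-!
A nontrivial permutation `σ` of the rows that preserves the positions of a symbol `e` defeats
unique solvability: place `σ` in the `e`-th slot and the identity in the other two. Then a column
of row `r` marked by two of the three permutations would carry two different symbols in `r`.
Swapping two rows with the same `e`-positions is such a permutation.
-/

theorem Equiv.swap_apply_iff_of_iff {α : Type*} [DecidableEq α] {a b : α} (Q : α → Prop)
    (hab : Q a ↔ Q b) (x : α) : Q (Equiv.swap a b x) ↔ Q x := by
  rcases eq_or_ne x a with rfl | hxa
  · rw [Equiv.swap_apply_left, hab]
  rcases eq_or_ne x b with rfl | hxb
  · rw [Equiv.swap_apply_right, hab]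
  · rw [Equiv.swap_apply_of_ne_of_ne hxa hxb]

theorem not_atLeastTwo_eq_one_two_three (x : Fin 3) : ¬ AtLeastTwo (x = 1) (x = 2) (x = 3) := by
  unfold AtLeastTwo
  fin_cases x <;> decide

theorem not_isUSP_of_perm_preserves_symbol {k : ℕ} {P : Finset (Fin k → Fin 3)}
    (σ : Equiv.Perm {r // r ∈ P}) (hσ : σ ≠ 1) (e : Fin 3)
    (hσe : ∀ r c, (σ r).1 c = e ↔ r.1 c = e) : ¬ IsUSP P := by
  intro hP
  obtain rfl | rfl | rfl : e = 1 ∨ e = 2 ∨ e = 3 := by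
    fin_cases e <;> simp
  · rcases hP σ 1 1 with ⟨h, -⟩ | ⟨r, c, h⟩
    · exact hσ h
    · rw [hσe] at h
      exact not_atLeastTwo_eq_one_two_three _ h
  · rcases hP 1 σ 1 with ⟨h, -⟩ | ⟨r, c, h⟩
    · exact hσ h.symm
    · rw [hσe] at h
      exact not_atLeastTwo_eq_one_two_three _ h
  · rcases hP 1 1 σ with ⟨-, h⟩ | ⟨r, c, h⟩
    · exact hσ h.symm
    · rw [hσe] at h
      exact not_atLeastTwo_eq_one_two_three _ h

theorem repeated_piece_not_usp_general {k : ℕ} (P : Finset (Fin k → Fin 3))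
    (e : Fin 3)
    (r₁ r₂ : Fin k → Fin 3) (hr₁ : r₁ ∈ P) (hr₂ : r₂ ∈ P) (hne : r₁ ≠ r₂)
    (hsame : ∀ c : Fin k, r₁ c = e ↔ r₂ c = e) : ¬ IsUSP P := by
  have hne' : (⟨r₁, hr₁⟩ : {r // r ∈ P}) ≠ ⟨r₂, hr₂⟩ := fun h => hne (congrArg Subtype.val h)
  refine not_isUSP_of_perm_preserves_symbol _ (mt Equiv.swap_eq_one_iff.mp hne') e fun r c => ?_
  exact Equiv.swap_apply_iff_of_iff (fun r : {r // r ∈ P} => r.1 c = e) (hsame c) r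

/-- If two distinct rows of `P` have the value `e ∈ {1,2,3}` in exactly the
same set of columns, then `P` is not a uniquely solvable puzzle. -/
theorem repeated_piece_not_usp {k : ℕ} (P : Finset (Fin k → Fin 3))
    (e : Fin 3) (he : e = 1 ∨ e = 2 ∨ e = 3)
    (r₁ r₂ : Fin k → Fin 3) (hr₁ : r₁ ∈ P) (hr₂ : r₂ ∈ P) (hne : r₁ ≠ r₂)
    (hsame : ∀ c : Fin k, r₁ c = e ↔ r₂ c = e) : ¬ IsUSP P :=
  repeated_piece_not_usp_general P e r₁ r₂ hr₁ hr₂ hne hsame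
end
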